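/- arXiv:1903.02027 — 3 statements merged into one kernel-verified Lean document; each statement's English description precedes it below -/
import Mathlib

section
/- Let 1 ≤ a ≤ 2 and let φ_a(ξ) = ξ₁|ξ|^a on ℝ². There exist constants c > 0 and N₀ ≥ 1, depending only on a, with the following property: for every real N ≥ N₀ and all ξ₁, ξ₂, ξ₃ ∈ ℝ² with N/8 ≤ |ξ_i| ≤ 8N for i = 1, 2, 3 and ξ₁ + ξ₂ + ξ₃ = 0, there are indices i, j ∈ {1,2,3} such that |∇φ_a(ξ_i) − ∇φ_a(ξ_j)| ≥ c N^a. -/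
open scoped ENNReal

/-- The gradient of the dispersion relation `φ_a(ξ) = ξ₁|ξ|^a` on `ℝ²`:
`∇φ_a(ξ) = (|ξ|^a + a ξ₁² |ξ|^{a-2}, a ξ₁ ξ₂ |ξ|^{a-2})`. -/
noncomputable def gradPhiA (a : ℝ) (ξ : EuclideanSpace ℝ (Fin 2)) :
    EuclideanSpace ℝ (Fin 2) :=
  (WithLp.equiv 2 (Fin 2 → ℝ)).symm
    ![‖ξ‖ ^ a + a * (ξ 0) ^ 2 * ‖ξ‖ ^ (a - 2), a * (ξ 0) * (ξ 1) * ‖ξ‖ ^ (a - 2)]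

/-! By homogeneity, `∇φ_a(tξ) = t^a ∇φ_a(ξ)`, so it suffices to bound the sum of the pairwise
velocity gaps from below on the compact set of triads with `N = 1`, where it is continuous; it is
then enough that it never vanishes, i.e. that three nonzero frequencies summing to zero never share
a gradient `g`. But a common gradient makes each `s = |ξ_i|^a` a root of
`(1 + a) s² - (2 + a) g₁ s + |g|² = 0`, so two of the `ξ_i` have equal norms. Equal norms and
equal gradients force `ξ_j = ±ξ_i`; then the third frequency is `0`, or `∓2ξ_i`, whose gradient
is `2^a ∇φ_a(ξ_i) ≠ ∇φ_a(ξ_i)`. -/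

local notation "ℝ²" => EuclideanSpace ℝ (Fin 2)

theorem eq_or_eq_or_eq_of_quadratic {K : Type*} [Field K] {A B C x y z : K} (hA : A ≠ 0)
    (hx : A * x ^ 2 + B * x + C = 0) (hy : A * y ^ 2 + B * y + C = 0)
    (hz : A * z ^ 2 + B * z + C = 0) : x = y ∨ x = z ∨ y = z := by
  have hxy : (x - y) * (A * (x + y) + B) = 0 := by linear_combination hx - hy
  have hxz : (x - z) * (A * (x + z) + B) = 0 := by linear_combination hx - hz
  rcases mul_eq_zero.1 hxy with h | h
  · exact Or.inl (sub_eq_zero.1 h)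
  rcases mul_eq_zero.1 hxz with h' | h'
  · exact Or.inr (Or.inl (sub_eq_zero.1 h'))
  refine Or.inr (Or.inr (mul_left_cancel₀ hA ?_))
  linear_combination h - h'

theorem eq_and_eq_or_eq_neg_and_eq_neg_of_sq_eq_of_mul_eq {x y x' y' : ℝ}
    (hx : x' ^ 2 = x ^ 2) (hy : y' ^ 2 = y ^ 2) (hxy : x' * y' = x * y) :
    (x' = x ∧ y' = y) ∨ (x' = -x ∧ y' = -y) := by
  rcases sq_eq_sq_iff_eq_or_eq_neg.1 hx with hx' | hx' <;>
    rcases sq_eq_sq_iff_eq_or_eq_neg.1 hy with hy' | hy'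
  · exact Or.inl ⟨hx', hy'⟩
  · have h : x * y = 0 := by rw [hx', hy'] at hxy; linarith
    rcases mul_eq_zero.1 h with h | h <;> simp [hx', hy', h]
  · have h : x * y = 0 := by rw [hx', hy'] at hxy; linarith
    rcases mul_eq_zero.1 h with h | h <;> simp [hx', hy', h]
  · exact Or.inr ⟨hx', hy'⟩

namespace EuclideanSpace

theorem eq_of_apply_eq {ξ η : ℝ²} (h0 : ξ 0 = η 0) (h1 : ξ 1 = η 1) : ξ = η := by
  ext i; fin_cases i <;> assumption

end EuclideanSpace

section

variable (a : ℝ)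

@[simp]
theorem gradPhiA_apply_zero (ξ : ℝ²) :
    gradPhiA a ξ 0 = ‖ξ‖ ^ a + a * ξ 0 ^ 2 * ‖ξ‖ ^ (a - 2) := by
  simp [gradPhiA]

@[simp]
theorem gradPhiA_apply_one (ξ : ℝ²) :
    gradPhiA a ξ 1 = a * ξ 0 * ξ 1 * ‖ξ‖ ^ (a - 2) := by
  simp [gradPhiA]

theorem gradPhiA_neg (ξ : ℝ²) : gradPhiA a (-ξ) = gradPhiA a ξ := by
  apply EuclideanSpace.eq_of_apply_eq <;> simp

theorem gradPhiA_smul {t : ℝ} (ht : 0 < t) (ξ : ℝ²) :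
    gradPhiA a (t • ξ) = t ^ a • gradPhiA a ξ := by
  have hnorm : ‖t • ξ‖ = t * ‖ξ‖ := by rw [norm_smul, Real.norm_of_nonneg ht.le]
  have hpow : t ^ a = t ^ (a - 2) * t ^ 2 := by
    rw [← Real.rpow_natCast, ← Real.rpow_add ht]; norm_num
  apply EuclideanSpace.eq_of_apply_eq <;>
    simp only [gradPhiA_apply_zero, gradPhiA_apply_one, PiLp.smul_apply, smul_eq_mul, hnorm,
      Real.mul_rpow ht.le (norm_nonneg ξ), hpow] <;> ring

theorem continuousOn_gradPhiA : ContinuousOn (gradPhiA a) {0}ᶜ := by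
  intro ξ hξ
  have hnorm : ‖ξ‖ ≠ 0 := norm_ne_zero_iff.2 hξ
  refine ContinuousAt.continuousWithinAt ?_
  unfold gradPhiA
  simp only [WithLp.equiv_symm_apply]
  fun_prop (disch := simp [hnorm])

theorem gradPhiA_quadratic {ξ : ℝ²} (hξ : ξ ≠ 0) :
    (1 + a) * (‖ξ‖ ^ a) ^ 2 - (2 + a) * gradPhiA a ξ 0 * ‖ξ‖ ^ a
      + (gradPhiA a ξ 0 ^ 2 + gradPhiA a ξ 1 ^ 2) = 0 := by
  have hr := norm_pos_iff.2 hξ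
  have hpow : ‖ξ‖ ^ a = ‖ξ‖ ^ (a - 2) * ‖ξ‖ ^ 2 := by
    rw [← Real.rpow_natCast, ← Real.rpow_add hr]; norm_num
  have hsq : ‖ξ‖ ^ 2 = ξ 0 ^ 2 + ξ 1 ^ 2 := by
    simp [EuclideanSpace.real_norm_sq_eq, Fin.sum_univ_two]
  rw [gradPhiA_apply_zero, gradPhiA_apply_one, hpow]
  linear_combination (-a ^ 2 * ξ 0 ^ 2 * (‖ξ‖ ^ (a - 2)) ^ 2) * hsq

end

section

variable {a : ℝ}

theorem gradPhiA_apply_zero_pos (ha : 0 ≤ a) {ξ : ℝ²} (hξ : ξ ≠ 0) :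
    0 < gradPhiA a ξ 0 := by
  have := norm_pos_iff.2 hξ
  rw [gradPhiA_apply_zero]; positivity

theorem gradPhiA_smul_ne (ha : 0 < a) {t : ℝ} (ht : 0 < t) (ht1 : t ≠ 1) {ξ : ℝ²}
    (hξ : ξ ≠ 0) : gradPhiA a (t • ξ) ≠ gradPhiA a ξ := by
  intro h
  have h0 := congrArg (· 0) h
  simp only [gradPhiA_smul a ht, PiLp.smul_apply, smul_eq_mul] at h0
  have hta : t ^ a = 1 :=
    mul_right_cancel₀ (gradPhiA_apply_zero_pos ha.le hξ).ne' (by rw [h0, one_mul])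
  exact ht1 ((Real.rpow_left_inj ht.le zero_le_one ha.ne').1 (by rw [hta, Real.one_rpow]))

theorem eq_or_eq_neg_of_gradPhiA_eq (ha : a ≠ 0) {ξ η : ℝ²} (hξ : ξ ≠ 0)
    (hn : ‖η‖ = ‖ξ‖) (h : gradPhiA a η = gradPhiA a ξ) : η = ξ ∨ η = -ξ := by
  have hp : a * ‖ξ‖ ^ (a - 2) ≠ 0 :=
    mul_ne_zero ha (Real.rpow_pos_of_pos (norm_pos_iff.2 hξ) _).ne'
  have e0 := congrArg (· 0) h
  have e1 := congrArg (· 1) h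
  simp only [gradPhiA_apply_zero, gradPhiA_apply_one, hn] at e0 e1
  have hx : η 0 ^ 2 = ξ 0 ^ 2 := mul_left_cancel₀ hp (by linear_combination e0)
  have hxy : η 0 * η 1 = ξ 0 * ξ 1 := mul_left_cancel₀ hp (by linear_combination e1)
  have hy : η 1 ^ 2 = ξ 1 ^ 2 := by
    have hsq := congrArg (· ^ 2) hn
    simp only [EuclideanSpace.real_norm_sq_eq, Fin.sum_univ_two] at hsq
    linear_combination hsq - hx
  rcases eq_and_eq_or_eq_neg_and_eq_neg_of_sq_eq_of_mul_eq hx hy hxy with ⟨h0, h1⟩ | ⟨h0, h1⟩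
  · exact Or.inl (EuclideanSpace.eq_of_apply_eq h0 h1)
  · exact Or.inr (EuclideanSpace.eq_of_apply_eq (by simp [h0]) (by simp [h1]))

theorem not_gradPhiA_eq_and_eq_of_norm_eq (ha : 0 < a) {u v w : ℝ²} (hu : u ≠ 0) (hw : w ≠ 0)
    (hsum : u + v + w = 0) (hn : ‖v‖ = ‖u‖) :
    ¬(gradPhiA a v = gradPhiA a u ∧ gradPhiA a w = gradPhiA a u) := by
  rintro ⟨hv, hw'⟩
  rcases eq_or_eq_neg_of_gradPhiA_eq ha.ne' hu hn hv with rfl | rfl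
  · have : w = (2 : ℝ) • -v := by linear_combination (norm := module) hsum
    subst this
    rw [← gradPhiA_neg a v] at hw'
    exact gradPhiA_smul_ne ha two_pos (by norm_num) (neg_ne_zero.2 hu) hw'
  · exact hw (by simpa using hsum)

theorem not_gradPhiA_eq_and_eq_of_add_add_eq_zero (ha : 0 < a) {u v w : ℝ²} (hu : u ≠ 0)
    (hv : v ≠ 0) (hw : w ≠ 0) (hsum : u + v + w = 0) :
    ¬(gradPhiA a v = gradPhiA a u ∧ gradPhiA a w = gradPhiA a u) := by
  rintro ⟨hvu, hwu⟩
  set g := gradPhiA a u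
  have hroot : ∀ x : ℝ², x ≠ 0 → gradPhiA a x = g →
      (1 + a) * (‖x‖ ^ a) ^ 2 + (-(2 + a) * g 0) * ‖x‖ ^ a + (g 0 ^ 2 + g 1 ^ 2) = 0 :=
    fun x hx hg => by rw [← hg]; linear_combination gradPhiA_quadratic a hx
  have hinj : ∀ x y : ℝ², ‖x‖ ^ a = ‖y‖ ^ a → ‖x‖ = ‖y‖ := fun x y =>
    (Real.rpow_left_inj (norm_nonneg x) (norm_nonneg y) ha.ne').1
  rcases eq_or_eq_or_eq_of_quadratic (by positivity : 1 + a ≠ 0) (hroot u hu rfl)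
    (hroot v hv hvu) (hroot w hw hwu) with h | h | h
  · exact not_gradPhiA_eq_and_eq_of_norm_eq ha hu hw hsum (hinj v u h.symm) ⟨hvu, hwu⟩
  · exact not_gradPhiA_eq_and_eq_of_norm_eq ha hu hv (by linear_combination (norm := module) hsum)
      (hinj w u h.symm) ⟨hwu, hvu⟩
  · exact not_gradPhiA_eq_and_eq_of_norm_eq ha hv hu (by linear_combination (norm := module) hsum)
      (hinj w v h.symm) ⟨hwu.trans hvu.symm, hvu.symm⟩

end

noncomputable def gradGap {ι : Type*} [Fintype ι] (a : ℝ) (ξ : ι → ℝ²) : ℝ :=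
  ∑ p : ι × ι, ‖gradPhiA a (ξ p.1) - gradPhiA a (ξ p.2)‖

section gradGap

variable {ι : Type*} [Fintype ι] (a : ℝ)

theorem gradGap_smul {t : ℝ} (ht : 0 < t) (ξ : ι → ℝ²) :
    gradGap a (t • ξ) = t ^ a * gradGap a ξ := by
  simp only [gradGap, Pi.smul_apply, gradPhiA_smul a ht, ← smul_sub, norm_smul,
    Real.norm_of_nonneg (Real.rpow_nonneg ht.le a), Finset.mul_sum]

theorem continuousOn_gradGap : ContinuousOn (gradGap a) {ξ : ι → ℝ² | ∀ i, ξ i ≠ 0} := by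
  have hgrad (i : ι) : ContinuousOn (fun ξ : ι → ℝ² => gradPhiA a (ξ i))
      {ξ | ∀ i, ξ i ≠ 0} :=
    (continuousOn_gradPhiA a).comp (continuous_apply i).continuousOn fun ξ hξ => hξ i
  exact continuousOn_finsetSum _ fun p _ => ((hgrad p.1).sub (hgrad p.2)).norm

end gradGap

theorem gradGap_pos {a : ℝ} (ha : 0 < a) {ξ : Fin 3 → ℝ²} (hξ : ∀ i, ξ i ≠ 0)
    (hsum : ξ 0 + ξ 1 + ξ 2 = 0) : 0 < gradGap a ξ := by
  refine (Finset.sum_nonneg fun _ _ => norm_nonneg _).lt_of_ne fun h => ?_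
  have hzero := (Finset.sum_eq_zero_iff_of_nonneg fun _ _ => norm_nonneg _).1 h.symm
  refine not_gradPhiA_eq_and_eq_of_add_add_eq_zero ha (hξ 0) (hξ 1) (hξ 2) hsum ⟨?_, ?_⟩
  · exact sub_eq_zero.1 (norm_eq_zero.1 (hzero (1, 0) (Finset.mem_univ _)))
  · exact sub_eq_zero.1 (norm_eq_zero.1 (hzero (2, 0) (Finset.mem_univ _)))

def normalizedTriads : Set (Fin 3 → ℝ²) :=
  {ξ | (∀ i, ‖ξ i‖ ∈ Set.Icc (1 / 8) 8) ∧ ξ 0 + ξ 1 + ξ 2 = 0}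

theorem isCompact_normalizedTriads : IsCompact normalizedTriads := by
  refine Metric.isCompact_of_isClosed_isBounded ?_ ?_
  · rw [normalizedTriads, Set.ofPred_and, Set.ofPred_forall]
    exact (isClosed_iInter fun i => isClosed_Icc.preimage (continuous_apply i).norm).inter
      (isClosed_eq (f := fun ξ : Fin 3 → ℝ² => ξ 0 + ξ 1 + ξ 2) (by fun_prop) continuous_const)
  · refine (Metric.isBounded_closedBall (x := 0) (r := 8)).subset fun ξ hξ => ?_
    rw [Metric.mem_closedBall, dist_zero_right]
    exact (pi_norm_le_iff_of_nonneg (by norm_num)).2 fun i => (hξ.1 i).2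

theorem ne_zero_of_mem_normalizedTriads {ξ : Fin 3 → ℝ²} (hξ : ξ ∈ normalizedTriads)
    (i : Fin 3) : ξ i ≠ 0 :=
  norm_pos_iff.1 (lt_of_lt_of_le (by norm_num) (hξ.1 i).1)

theorem inv_smul_mem_normalizedTriads {N : ℝ} (hN : 0 < N) {ξ : Fin 3 → ℝ²}
    (hξ : ∀ i, N / 8 ≤ ‖ξ i‖ ∧ ‖ξ i‖ ≤ 8 * N) (hsum : ξ 0 + ξ 1 + ξ 2 = 0) :
    N⁻¹ • ξ ∈ normalizedTriads := by
  refine ⟨fun i => ?_, by simp only [Pi.smul_apply, ← smul_add, hsum, smul_zero]⟩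
  rw [Pi.smul_apply, norm_smul, Real.norm_of_nonneg (inv_nonneg.2 hN.le), Set.mem_Icc,
    ← div_eq_inv_mul, le_div_iff₀ hN, div_le_iff₀ hN]
  exact ⟨by linarith [(hξ i).1], by linarith [(hξ i).2]⟩

theorem exists_pos_le_gradGap {a : ℝ} (ha : 0 < a) :
    ∃ c > 0, ∀ ξ ∈ normalizedTriads, c ≤ gradGap a ξ :=
  isCompact_normalizedTriads.exists_forall_le'
    ((continuousOn_gradGap a).mono fun _ hξ => ne_zero_of_mem_normalizedTriads hξ)
    fun _ hξ => gradGap_pos ha (ne_zero_of_mem_normalizedTriads hξ) hξ.2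

theorem high_high_high_transversality_general (a : ℝ) (ha1 : 1 ≤ a) :
    ∃ c > 0, ∃ N₀ : ℝ, 1 ≤ N₀ ∧
      ∀ N : ℝ, N₀ ≤ N →
        ∀ ξ : Fin 3 → EuclideanSpace ℝ (Fin 2),
          (∀ i, N/8 ≤ ‖ξ i‖ ∧ ‖ξ i‖ ≤ 8 * N) →
          ξ 0 + ξ 1 + ξ 2 = 0 →
          ∃ i j : Fin 3, c * N ^ a ≤ ‖gradPhiA a (ξ i) - gradPhiA a (ξ j)‖ := by
  have ha : 0 < a := by linarith
  obtain ⟨c, hc, hcK⟩ := exists_pos_le_gradGap ha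
  refine ⟨c / 9, by positivity, 1, le_rfl, fun N hN ξ hξ hsum => ?_⟩
  have hN0 : 0 < N := by linarith
  have hgap : ∑ _p : Fin 3 × Fin 3, c / 9 * N ^ a ≤ gradGap a ξ := by
    have := hcK _ (inv_smul_mem_normalizedTriads hN0 hξ hsum)
    rw [gradGap_smul a (inv_pos.2 hN0), Real.inv_rpow hN0.le,
      le_inv_mul_iff₀ (Real.rpow_pos_of_pos hN0 a)] at this
    simp only [Finset.sum_const, Finset.card_univ, Fintype.card_prod, Fintype.card_fin,
      nsmul_eq_mul]
    linarith
  obtain ⟨p, -, hp⟩ := Finset.exists_le_of_sum_le Finset.univ_nonempty hgap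
  exact ⟨p.1, p.2, hp⟩

/-- High×High×High transversality for the fractional Zakharov-Kuznetsov dispersion
relation in the plane: for frequencies `ξ₁, ξ₂, ξ₃ ∈ ℝ²` of comparable size `N`
summing to zero, two of the group velocities differ by at least `c N^a`. -/
theorem high_high_high_transversality (a : ℝ) (ha1 : 1 ≤ a) (ha2 : a ≤ 2) :
    ∃ c > 0, ∃ N₀ : ℝ, 1 ≤ N₀ ∧
      ∀ N : ℝ, N₀ ≤ N →
        ∀ ξ : Fin 3 → EuclideanSpace ℝ (Fin 2),
          (∀ i, N/8 ≤ ‖ξ i‖ ∧ ‖ξ i‖ ≤ 8 * N) →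
          ξ 0 + ξ 1 + ξ 2 = 0 →
          ∃ i j : Fin 3, c * N ^ a ≤ ‖gradPhiA a (ξ i) - gradPhiA a (ξ j)‖ :=
  high_high_high_transversality_general a ha1
end

section
/- Let n ≥ 2 and 1 ≤ a ≤ 2, and for ξ ∈ ℝⁿ with ξ ≠ 0 let ∂₁φ_a(ξ) = |ξ|^a + a ξ₁² |ξ|^{a−2}. There exists a constant c > 0, depending only on n and a, such that for all integers k₁, k₂ with k₁ ≤ k₂ − 10 and all ξ, ζ ∈ ℝⁿ with 2^{k₁−1} ≤ |ξ| < 2^{k₁} and 2^{k₂−1} ≤ |ζ| < 2^{k₂}: |∂₁φ_a(ξ) − ∂₁φ_a(ζ)| ≥ c · 2^{a k₁}. -/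
lemma coord_sq_le_norm_sq {n : ℕ} (x : EuclideanSpace ℝ (Fin n)) (i : Fin n) :
    (x i) ^ 2 ≤ ‖x‖ ^ 2 := by
  rw [EuclideanSpace.norm_eq, Real.sq_sqrt (by positivity)]
  simp only [Real.norm_eq_abs, sq_abs]
  exact Finset.single_le_sum (fun j _ => sq_nonneg (x j)) (Finset.mem_univ i)

/-- Transversality of separated dyadic frequencies for the fractional
Zakharov-Kuznetsov dispersion relation `φ_a(ξ) = ξ₁|ξ|^a` on `ℝⁿ`: if
`2^{k₁-1} ≤ |ξ| < 2^{k₁}`, `2^{k₂-1} ≤ |ζ| < 2^{k₂}` and `k₁ ≤ k₂ - 10`, then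
`|∂₁φ_a(ξ) − ∂₁φ_a(ζ)| ≥ c 2^{a k₁}`, where
`∂₁φ_a(ξ) = |ξ|^a + a ξ₁² |ξ|^{a-2}`. -/
theorem transversality_separated_frequencies
    (n : ℕ) (hn : 2 ≤ n) (a : ℝ) (ha1 : 1 ≤ a) (ha2 : a ≤ 2) :
    ∃ c > 0, ∀ k₁ k₂ : ℤ, k₁ ≤ k₂ - 10 →
      ∀ ξ ζ : EuclideanSpace ℝ (Fin n),
        (2:ℝ) ^ (k₁ - 1) ≤ ‖ξ‖ → ‖ξ‖ < (2:ℝ) ^ k₁ →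
        (2:ℝ) ^ (k₂ - 1) ≤ ‖ζ‖ → ‖ζ‖ < (2:ℝ) ^ k₂ →
        c * (2:ℝ) ^ (a * (k₁ : ℝ)) ≤
          |(‖ξ‖ ^ a + a * (ξ ⟨0, by omega⟩) ^ 2 * ‖ξ‖ ^ (a - 2)) -
            (‖ζ‖ ^ a + a * (ζ ⟨0, by omega⟩) ^ 2 * ‖ζ‖ ^ (a - 2))| := by
  refine ⟨1, one_pos, fun k₁ k₂ hk ξ ζ hξ1 hξ2 hζ1 hζ2 => ?_⟩
  set r := ‖ξ‖ with hr
  set s := ‖ζ‖ with hs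
  have hrpos : 0 < r := lt_of_lt_of_le (zpow_pos two_pos _) hξ1
  have hspos : 0 < s := lt_of_lt_of_le (zpow_pos two_pos _) hζ1
  have hX : (0:ℝ) < (2:ℝ) ^ (a * (k₁ : ℝ)) := Real.rpow_pos_of_pos two_pos _
  set X := (2:ℝ) ^ (a * (k₁ : ℝ)) with hXdef
  -- bound for ξ term
  have hcoordξ : (ξ ⟨0, by omega⟩) ^ 2 ≤ r ^ 2 := coord_sq_le_norm_sq ξ _
  have hcoordζ : (ζ ⟨0, by omega⟩) ^ 2 ≤ s ^ 2 := coord_sq_le_norm_sq ζ _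
  have hr2 : r ^ (2:ℕ) * r ^ (a - 2) = r ^ a := by
    rw [← Real.rpow_natCast r 2, ← Real.rpow_add hrpos]
    norm_num
  have hDξ : r ^ a + a * (ξ ⟨0, by omega⟩) ^ 2 * r ^ (a - 2) ≤ 3 * r ^ a := by
    have h1 : a * (ξ ⟨0, by omega⟩) ^ 2 * r ^ (a - 2) ≤ 2 * (r ^ (2:ℕ) * r ^ (a - 2)) := by
      have ht := Real.rpow_nonneg hrpos.le (a - 2)
      have hA : a * (ξ ⟨0, by omega⟩) ^ 2 ≤ 2 * r ^ (2:ℕ) := by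
        push_cast
        nlinarith [sq_nonneg (ξ ⟨0, by omega⟩)]
      calc a * (ξ ⟨0, by omega⟩) ^ 2 * r ^ (a - 2) ≤ 2 * r ^ (2:ℕ) * r ^ (a - 2) :=
            mul_le_mul_of_nonneg_right hA ht
        _ = 2 * (r ^ (2:ℕ) * r ^ (a - 2)) := by ring
    rw [hr2] at h1
    linarith
  have hrX : r ^ a < X := by
    calc r ^ a < ((2:ℝ) ^ k₁) ^ a :=
          Real.rpow_lt_rpow hrpos.le hξ2 (by linarith)
      _ = X := by
          rw [hXdef, ← Real.rpow_intCast 2 k₁, ← Real.rpow_mul (by norm_num), mul_comm]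
  -- lower bound for ζ term
  have hsX : 512 * X ≤ s ^ a := by
    have h1 : ((2:ℝ) ^ (k₂ - 1)) ^ a ≤ s ^ a :=
      Real.rpow_le_rpow (zpow_pos two_pos _).le hζ1 (by linarith)
    have h2 : ((2:ℝ) ^ (k₂ - 1)) ^ a = (2:ℝ) ^ (a * ((k₂:ℝ) - 1)) := by
      rw [← Real.rpow_intCast 2 (k₂ - 1), ← Real.rpow_mul (by norm_num), mul_comm]
      push_cast
      ring_nf
    have h3 : (2:ℝ) ^ (a * (k₁:ℝ) + 9) ≤ (2:ℝ) ^ (a * ((k₂:ℝ) - 1)) := by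
      apply Real.rpow_le_rpow_left_iff (x := (2:ℝ)) (by norm_num) |>.2
      have hk' : (k₁:ℝ) + 9 ≤ (k₂:ℝ) - 1 := by
        have : (k₁:ℝ) ≤ (k₂:ℝ) - 10 := by exact_mod_cast hk
        linarith
      nlinarith
    have h4 : (2:ℝ) ^ (a * (k₁:ℝ) + 9) = X * 512 := by
      rw [Real.rpow_add two_pos, hXdef]
      norm_num
    calc 512 * X = (2:ℝ) ^ (a * (k₁:ℝ) + 9) := by rw [h4]; ring
      _ ≤ (2:ℝ) ^ (a * ((k₂:ℝ) - 1)) := h3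
      _ = ((2:ℝ) ^ (k₂ - 1)) ^ a := h2.symm
      _ ≤ s ^ a := h1
  have hDζ : 512 * X ≤ s ^ a + a * (ζ ⟨0, by omega⟩) ^ 2 * s ^ (a - 2) := by
    have : 0 ≤ a * (ζ ⟨0, by omega⟩) ^ 2 * s ^ (a - 2) := by positivity
    linarith
  have key : X ≤ (s ^ a + a * (ζ ⟨0, by omega⟩) ^ 2 * s ^ (a - 2)) -
      (r ^ a + a * (ξ ⟨0, by omega⟩) ^ 2 * r ^ (a - 2)) := by linarith
  rw [abs_sub_comm]
  calc 1 * X = X := one_mul X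
    _ ≤ _ := key
    _ ≤ _ := le_abs_self _
end

section
/- Let a ≥ 1. There exists a constant C, depending only on a, such that for all t ∈ ℝ with t ≠ 0 and all x₁ ∈ ℝ, the Lebesgue measure of the set {r ∈ [1/2, 2] : |t r^a + x₁| ≤ 2} is at most C |t|^{−1}. -/
/-!
On `[1/2, 2]` the map `r ↦ t r ^ a + x₁` is expanding with factor `|t| a (1/2) ^ (a - 1)`, since
`a ≥ 1` makes the derivative of `r ↦ r ^ a` increasing. Any two points of the sublevel set have
images within `4` of each other, so the set has diameter, hence measure, `O(|t|⁻¹)`.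
-/

open MeasureTheory Set

namespace Real

theorem mul_rpow_sub_one_mul_sub_le_rpow_sub_rpow {a c r s : ℝ} (ha : 1 ≤ a) (hc : 0 ≤ c)
    (hcr : c ≤ r) (hrs : r ≤ s) : a * c ^ (a - 1) * (s - r) ≤ s ^ a - r ^ a := by
  have hdiff := differentiable_rpow_const ha
  refine (convex_Ici c).mul_sub_le_image_sub_of_le_deriv hdiff.continuous.continuousOn
    hdiff.differentiableOn (fun x hx => ?_) r hcr s (hcr.trans hrs) hrs
  rw [interior_Ici, mem_Ioi] at hx
  rw [deriv_rpow_const]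
  gcongr

theorem mul_rpow_sub_one_mul_dist_le_dist_rpow {a c r s : ℝ} (ha : 1 ≤ a) (hc : 0 ≤ c)
    (hr : c ≤ r) (hs : c ≤ s) : a * c ^ (a - 1) * dist r s ≤ dist (r ^ a) (s ^ a) := by
  wlog hrs : r ≤ s generalizing r s
  · rw [dist_comm, dist_comm (r ^ a)]
    exact this hs hr (le_of_not_ge hrs)
  have hmono : r ^ a ≤ s ^ a := rpow_le_rpow (hc.trans hr) hrs (by linarith)
  rw [dist_comm, dist_comm (r ^ a), dist_eq, dist_eq, abs_of_nonneg (sub_nonneg.2 hrs),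
    abs_of_nonneg (sub_nonneg.2 hmono)]
  exact mul_rpow_sub_one_mul_sub_le_rpow_sub_rpow ha hc hr hrs

theorem volume_le_of_forall_mul_dist_le_dist {s : Set ℝ} {f : ℝ → ℝ} {m ε : ℝ} (hm : 0 < m)
    (hf : ∀ x ∈ s, ∀ y ∈ s, m * dist x y ≤ dist (f x) (f y)) (hε : ∀ x ∈ s, |f x| ≤ ε) :
    volume s ≤ ENNReal.ofReal (2 * ε / m) := by
  refine (volume_le_diam s).trans (Metric.ediam_le_of_forall_dist_le fun x hx y hy => ?_)
  rw [le_div_iff₀ hm, mul_comm]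
  calc m * dist x y ≤ dist (f x) (f y) := hf x hx y hy
    _ ≤ |f x| + |f y| := by rw [dist_eq]; exact abs_sub _ _
    _ ≤ 2 * ε := by linarith [hε x hx, hε y hy]

end Real

/-- Sublevel set estimate: for `a ≥ 1` there is a constant `C = C(a)` such that for
all `t ≠ 0` and `x₁ ∈ ℝ`, the Lebesgue measure of
`{r ∈ [1/2, 2] : |t r^a + x₁| ≤ 2}` is at most `C |t|⁻¹`. -/
theorem sublevel_set_estimate (a : ℝ) (ha : 1 ≤ a) :
    ∃ C > 0, ∀ t : ℝ, t ≠ 0 → ∀ x₁ : ℝ,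
      volume {r : ℝ | r ∈ Set.Icc (1/2 : ℝ) 2 ∧ |t * r ^ a + x₁| ≤ 2} ≤
        ENNReal.ofReal (C / |t|) := by
  set k : ℝ := a * (1 / 2) ^ (a - 1)
  have hk : 0 < k := by positivity
  refine ⟨4 / k, by positivity, fun t ht x₁ => ?_⟩
  set S := {r : ℝ | r ∈ Icc (1/2 : ℝ) 2 ∧ |t * r ^ a + x₁| ≤ 2}
  have hexpand : ∀ r ∈ S, ∀ s ∈ S,
      |t| * k * dist r s ≤ dist (t * r ^ a + x₁) (t * s ^ a + x₁) := by
    rintro r ⟨⟨hr, -⟩, -⟩ s ⟨⟨hs, -⟩, -⟩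
    rw [dist_add_right, Real.dist_eq (t * _), ← mul_sub, abs_mul, ← Real.dist_eq, mul_assoc]
    gcongr
    exact Real.mul_rpow_sub_one_mul_dist_le_dist_rpow ha (by norm_num) hr hs
  convert Real.volume_le_of_forall_mul_dist_le_dist (by positivity) hexpand (fun r hr => hr.2)
    using 2
  field_simp
  norm_num
end
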